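/- Fix real numbers k ≥ 1, C₂ ≥ 1, C₁ with k·C₂² < C₁, δ ∈ (0,1), M > 0 and h ≥ 0 (the per-sample annotation entropy H/m). Let β, β̃ : ℕ → ℝ satisfy β(m) ≥ 0, β̃(m) ≥ 0 for all m, and m·β̃(m) → 0 as m → ∞. For m ∈ ℕ define n(m) = m·exp(h)/(k·C₂²), B_WCT(m) = 2β(m) + (4mβ(m) + M)·√(C₁·ln(1/δ)/(2m·exp(h))), and B_META(m) = 2β(m) + 2β̃(m) + (4·n(m)·β̃(m) + M)·√(k·C₂²·ln(1/δ)/(2m·exp(h))). Then for all sufficiently large m, B_META(m) < B_WCT(m): the entropy-limited meta-learning generalization bound is eventually strictly tighter than the entropy-limited whole-class training bound whenever C₂²·k < C₁. -/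
import Mathlib


open Filter Real

/-- Corollary 1 (full-bound asymptotic form): if `k·C₂² < C₁` and the meta-level
stability satisfies `m·β̃(m) → 0`, then for all sufficiently large `m` the
entropy-limited meta-learning bound is strictly tighter than the entropy-limited
whole-class training bound. -/
theorem stmt_9 (k C₂ C₁ : ℝ) (hk : 1 ≤ k) (hC₂ : 1 ≤ C₂) (hlt : k * C₂ ^ 2 < C₁)
    (δ : ℝ) (hδ : δ ∈ Set.Ioo (0 : ℝ) 1) (M : ℝ) (hM : 0 < M) (h : ℝ) (hh : 0 ≤ h)
    (β β' : ℕ → ℝ) (hβ : ∀ m, 0 ≤ β m) (hβ' : ∀ m, 0 ≤ β' m)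
    (hβ'lim : Tendsto (fun m : ℕ => (m : ℝ) * β' m) atTop (nhds 0)) :
    ∀ᶠ m : ℕ in atTop,
      2 * β m + 2 * β' m +
          (4 * ((m : ℝ) * Real.exp h / (k * C₂ ^ 2)) * β' m + M) *
            Real.sqrt (k * C₂ ^ 2 * Real.log (1 / δ) / (2 * m * Real.exp h)) <
        2 * β m + (4 * (m : ℝ) * β m + M) *
            Real.sqrt (C₁ * Real.log (1 / δ) / (2 * m * Real.exp h)) := by
  obtain ⟨hδ0, hδ1⟩ := hδ
  set A := k * C₂ ^ 2 with hAdef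
  have hA1 : 1 ≤ A := by nlinarith
  have hA0 : 0 < A := by linarith
  have hE : 0 < Real.exp h := Real.exp_pos h
  have hL : 0 < Real.log (1 / δ) := Real.log_pos (by rw [lt_div_iff₀ hδ0]; linarith)
  set L := Real.log (1 / δ) with hLdef
  set a := Real.sqrt (A * L / (2 * Real.exp h)) with ha
  set b := Real.sqrt (C₁ * L / (2 * Real.exp h)) with hb
  have ha0 : 0 ≤ a := Real.sqrt_nonneg _
  have hab : a < b := by
    apply Real.sqrt_lt_sqrt (by positivity)
    gcongr
  set K := 4 * (Real.exp h / A) * a with hK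
  have hK0 : 0 ≤ K := by positivity
  set c := M * (b - a) with hc
  have hc0 : 0 < c := by
    apply mul_pos hM; linarith
  have hev1 : ∀ᶠ m : ℕ in atTop, (m : ℝ) * β' m < c / (2 + K) :=
    hβ'lim.eventually_lt_const (by positivity)
  filter_upwards [hev1, eventually_ge_atTop 1] with m ht hm1
  have hm1R : (1 : ℝ) ≤ (m : ℝ) := by exact_mod_cast hm1
  have hm0 : (0 : ℝ) < (m : ℝ) := by linarith
  set s := Real.sqrt m with hs
  have hs1 : 1 ≤ s := by rw [hs, Real.one_le_sqrt]; exact hm1R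
  have hs0 : 0 < s := by linarith
  have hss : s * s = (m : ℝ) := Real.mul_self_sqrt hm0.le
  have hsm : s ≤ (m : ℝ) := by nlinarith
  have hrwa : A * L / (2 * (m : ℝ) * Real.exp h) = (A * L / (2 * Real.exp h)) / m := by
    ring
  have hrwb : C₁ * L / (2 * (m : ℝ) * Real.exp h) = (C₁ * L / (2 * Real.exp h)) / m := by
    ring
  have hsa : Real.sqrt (A * L / (2 * Real.exp h) / m) = a / s := by
    rw [Real.sqrt_div (div_nonneg (mul_nonneg hA0.le hL.le) (by positivity)), ← ha, ← hs]
  have hsb : Real.sqrt (C₁ * L / (2 * Real.exp h) / m) = b / s := by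
    rw [Real.sqrt_div (div_nonneg (mul_nonneg (by linarith : (0:ℝ) ≤ C₁) hL.le) (by positivity)), ← hb, ← hs]
  rw [hrwa, hrwb, hsa, hsb]
  set t := (m : ℝ) * β' m with htdef
  have ht0 : 0 ≤ t := mul_nonneg hm0.le (hβ' m)
  have htc : (2 + K) * t < c := by
    calc (2 + K) * t < (2 + K) * (c / (2 + K)) := by
          apply mul_lt_mul_of_pos_left ht (by positivity)
      _ = c := by field_simp
  have hβ's : β' m * s ≤ t := by
    calc β' m * s ≤ β' m * m := by
          exact mul_le_mul_of_nonneg_left hsm (hβ' m)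
      _ = t := by rw [htdef]; ring
  have key : (2 * β' m) * s + (4 * ((m : ℝ) * Real.exp h / A) * β' m + M) * a < M * b := by
    have hexp : (4 * ((m : ℝ) * Real.exp h / A) * β' m) * a = K * t := by
      rw [hK, htdef]; field_simp
    have hsplit : (2 * β' m) * s + (4 * ((m : ℝ) * Real.exp h / A) * β' m + M) * a
        = 2 * (β' m * s) + K * t + M * a := by linear_combination hexp
    rw [hsplit, hc] at *
    linarith [htc, hβ's]
  have key2 : 2 * β' m + (4 * ((m : ℝ) * Real.exp h / A) * β' m + M) * (a / s) < M * (b / s) := by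
    rw [show M * (b / s) = (M * b) / s by ring,
        show 2 * β' m + (4 * ((m : ℝ) * Real.exp h / A) * β' m + M) * (a / s)
          = ((2 * β' m) * s + (4 * ((m : ℝ) * Real.exp h / A) * β' m + M) * a) / s by
          field_simp]
    exact div_lt_div_of_pos_right key hs0
  have hterm : 0 ≤ 4 * (m : ℝ) * β m * (b / s) := by
    exact mul_nonneg (mul_nonneg (by positivity) (hβ m)) (div_nonneg (by linarith) hs0.le)
  have hsplit2 : (4 * (m : ℝ) * β m + M) * (b / s) = 4 * (m : ℝ) * β m * (b / s) + M * (b / s) := by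
    ring
  linarith [key2, hterm]
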